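/- On a flat torus 𝕋ⁿ = ℝⁿ/Λ with Λ the standard integer lattice (rescaled), a closed geodesic representing the free homotopy class (m₁,…,m_n) ∈ ℤⁿ = π₁(𝕋ⁿ), with not all m_i zero, has minimizing index equal to 2·max_i |m_i| when max_i |m_i| ≥ 1 and the torus is a product of circles each traversed m_i times; in particular, the circle factor traversed m times yields a closed geodesic of minimizing index 2m on S¹ for m ≥ 1. -/

import Mathlib

/-!
Shifting `γ(t) = (rᵢ mᵢ t)ᵢ` by `2π/k` moves its `i`-th coordinate along an arc of length
`ℓᵢ/k`, `ℓᵢ = 2π rᵢ mᵢ`. On a circle of circumference `2π rᵢ` this gives a distance at most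
`ℓᵢ/k`, with equality exactly when `ℓᵢ/k ≤ π rᵢ`, i.e. `2 mᵢ ≤ k`. The torus distance and `L/k`
are the `ℓ²`-combinations of the coordinate distances and of the `ℓᵢ/k`, so
`d(γ t, γ(t + 2π/k)) = L/k` holds iff `2 mᵢ ≤ k` for all `i`, and the least such `k` is
`2 maxᵢ mᵢ`.
-/

open Real

noncomputable def torusDist {ι : Type*} [Fintype ι] (r : ι → ℝ)
    (p q : ∀ i, AddCircle (2 * π * r i)) : ℝ :=
  Real.sqrt (∑ i, dist (p i) (q i) ^ 2)

namespace AddCircle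

theorem dist_coe_coe_add (p x δ : ℝ) :
    dist (x : AddCircle p) ((x + δ : ℝ) : AddCircle p) = ‖(δ : AddCircle p)‖ := by
  rw [dist_eq_norm', ← coe_sub, add_sub_cancel_left]

theorem norm_coe_le_abs (p x : ℝ) : ‖(x : AddCircle p)‖ ≤ |x| := by
  simpa using QuotientAddGroup.norm_mk_le_norm (S := AddSubgroup.zmultiples p) (m := x)

end AddCircle

section SumOfSquares

variable {ι : Type*} [Fintype ι]

theorem sqrt_sum_sq_div (a : ι → ℝ) {c : ℝ} (hc : 0 ≤ c) :
    √(∑ i, (a i / c) ^ 2) = √(∑ i, a i ^ 2) / c := by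
  simp_rw [div_pow, ← Finset.sum_div]
  rw [sqrt_div' _ (sq_nonneg c), sqrt_sq hc]

theorem sqrt_sum_sq_eq_sqrt_sum_sq_iff {f g : ι → ℝ} (hf : 0 ≤ f) (hfg : f ≤ g) :
    √(∑ i, f i ^ 2) = √(∑ i, g i ^ 2) ↔ f = g := by
  have hg : 0 ≤ g := hf.trans hfg
  rw [sqrt_inj (by positivity) (by positivity),
    Finset.sum_eq_sum_iff_of_le fun i _ => pow_le_pow_left₀ (hf i) (hfg i) 2, funext_iff]
  simp only [Finset.mem_univ, true_implies, pow_left_inj₀ (hf _) (hg _) two_ne_zero]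

end SumOfSquares

section ClosedGeodesic

variable {ι : Type*} (r : ι → ℝ) (m : ι → ℕ)

noncomputable def closedGeodesic (t : ℝ) : ∀ i, AddCircle (2 * π * r i) :=
  fun i => ((r i * m i * t : ℝ) : AddCircle (2 * π * r i))

theorem dist_closedGeodesic_add_apply (t s : ℝ) (i : ι) :
    dist (closedGeodesic r m t i) (closedGeodesic r m (t + s) i) =
      ‖((r i * m i * s : ℝ) : AddCircle (2 * π * r i))‖ := by
  rw [closedGeodesic, closedGeodesic, mul_add, AddCircle.dist_coe_coe_add]

variable {r}

theorem dist_closedGeodesic_eq_iff (hr : ∀ i, 0 < r i) {k : ℝ} (hk : 0 < k) (t : ℝ) (i : ι) :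
    dist (closedGeodesic r m t i) (closedGeodesic r m (t + 2 * π / k) i) =
      2 * π * r i * m i / k ↔ 2 * m i ≤ k := by
  have hri := hr i
  have hℓ : r i * m i * (2 * π / k) = 2 * π * r i * m i / k := by ring
  have hℓ_nonneg : 0 ≤ 2 * π * r i * m i / k := by positivity
  rw [dist_closedGeodesic_add_apply, hℓ]
  nth_rw 2 [← abs_of_nonneg hℓ_nonneg]
  rw [AddCircle.norm_coe_eq_abs_iff (p := 2 * π * r i) (by positivity), abs_of_nonneg hℓ_nonneg,
    abs_of_pos (by positivity), div_le_iff₀ hk]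
  rw [show 2 * π * r i * m i = π * r i * (2 * m i) by ring,
    show 2 * π * r i / 2 * k = π * r i * k by ring, mul_le_mul_iff_of_pos_left (by positivity)]

theorem torusDist_closedGeodesic_eq_iff [Fintype ι] (hr : ∀ i, 0 < r i) {k : ℕ} (hk : 0 < k)
    (t : ℝ) :
    torusDist r (closedGeodesic r m t) (closedGeodesic r m (t + 2 * π / k)) =
      √(∑ i, (2 * π * r i * m i) ^ 2) / k ↔ ∀ i, 2 * m i ≤ k := by
  have hk' : (0 : ℝ) < k := Nat.cast_pos.2 hk
  have hle (i : ι) : dist (closedGeodesic r m t i) (closedGeodesic r m (t + 2 * π / k) i) ≤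
      2 * π * r i * m i / k := by
    have hri := hr i
    rw [dist_closedGeodesic_add_apply]
    refine (AddCircle.norm_coe_le_abs _ _).trans_eq ?_
    rw [abs_of_nonneg (by positivity)]
    ring
  rw [torusDist, ← sqrt_sum_sq_div _ hk'.le,
    sqrt_sum_sq_eq_sqrt_sum_sq_iff (fun i => dist_nonneg) hle, funext_iff]
  exact forall_congr' fun i => (dist_closedGeodesic_eq_iff m hr hk' t i).trans (by norm_cast)

end ClosedGeodesic

theorem minind_flat_torus_general
    {ι : Type*} [Fintype ι] (r : ι → ℝ) (hr : ∀ i, 0 < r i)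
    (m : ι → ℕ) (hm : 1 ≤ Finset.univ.sup m)
    (γ : ℝ → ∀ i, AddCircle (2 * π * r i))
    (hγ : ∀ t i, γ t i = ((r i * m i * t : ℝ) : AddCircle (2 * π * r i)))
    (L : ℝ) (hL : L = Real.sqrt (∑ i, (2 * π * r i * m i) ^ 2)) :
    IsLeast {k : ℕ | 2 ≤ k ∧
      ∀ t : ℝ, torusDist r (γ t) (γ (t + 2 * π / k)) = L / k}
      (2 * Finset.univ.sup m) := by
  obtain rfl : γ = closedGeodesic r m := funext fun t => funext (hγ t)
  subst hL
  have hset : {k : ℕ | 2 ≤ k ∧ ∀ t : ℝ, torusDist r (closedGeodesic r m t)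
      (closedGeodesic r m (t + 2 * π / k)) = √(∑ i, (2 * π * r i * m i) ^ 2) / k} =
      {k : ℕ | 2 ≤ k ∧ ∀ i, 2 * m i ≤ k} := by
    ext k
    refine and_congr_right fun hk => ?_
    simp only [torusDist_closedGeodesic_eq_iff m hr (by omega : 0 < k), forall_const]
  rw [hset]
  refine ⟨⟨by omega, fun i => Nat.mul_le_mul_left 2 (Finset.le_sup (Finset.mem_univ i))⟩,
    ?_⟩
  rintro k ⟨-, hk⟩
  have hsup : Finset.univ.sup m ≤ k / 2 :=
    Finset.sup_le fun i _ => (Nat.le_div_iff_mul_le two_pos).2 (by linarith [hk i])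
  omega

/-- on the flat torus `𝕋ⁿ = Πᵢ S¹_{rᵢ}`, the closed geodesic
`γ(t) = (rᵢ mᵢ t)ᵢ` representing the free homotopy class `(m₁, …, mₙ) ∈ ℤⁿ`
(each circle factor traversed `mᵢ ≥ 0` times, not all `mᵢ` zero), of length
`L = √(Σ (2π rᵢ mᵢ)²)`, has minimizing index `2·maxᵢ mᵢ`: i.e. `2·maxᵢ mᵢ` is
the least `k ≥ 2` with `d(γ t, γ(t + 2π/k)) = L/k` for all `t`. -/
theorem minind_flat_torus
    {ι : Type*} [Fintype ι] [Nonempty ι] (r : ι → ℝ) (hr : ∀ i, 0 < r i)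
    (m : ι → ℕ) (hm : 1 ≤ Finset.univ.sup m)
    (γ : ℝ → ∀ i, AddCircle (2 * π * r i))
    (hγ : ∀ t i, γ t i = ((r i * m i * t : ℝ) : AddCircle (2 * π * r i)))
    (L : ℝ) (hL : L = Real.sqrt (∑ i, (2 * π * r i * m i) ^ 2)) :
    IsLeast {k : ℕ | 2 ≤ k ∧
      ∀ t : ℝ, torusDist r (γ t) (γ (t + 2 * π / k)) = L / k}
      (2 * Finset.univ.sup m) :=
  minind_flat_torus_general r hr m hm γ hγ L hL
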